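/- For a closed (D+1)-colored graph G, the number of faces (bicolored 2-bubbles) satisfies |G^(2)| = (1/2)·binom(D,2)·|G^(0)| + D - 2ω(G)/(D-1)!, where ω(G) is Gurău's degree, defined as the sum of the genera of the D!/2 jackets of G. -/

import Mathlib

open scoped Classical

structure PreGraph (D : ℕ) where
  W : Type
  B : Type
  E : Type
  [finW : Finite W]
  [finB : Finite B]
  [finE : Finite E]
  src : E → W
  tgt : E → B
  col : E → Fin D

attribute [instance] PreGraph.finW PreGraph.finB PreGraph.finE

namespace PreGraph

variable {D : ℕ}

/-- A regularly edge-colored bipartite graph: at every white (resp. black) vertex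
there is exactly one incident edge of each of the `D` colors. -/
def Regular (G : PreGraph D) : Prop :=
  (∀ w c, ∃! e, G.src e = w ∧ G.col e = c) ∧
  (∀ b c, ∃! e, G.tgt e = b ∧ G.col e = c)

/-- The simple graph on all the vertices of `G` whose edges are the edges of `G`
with color in `S`. -/
def adjOn (G : PreGraph D) (S : Set (Fin D)) : SimpleGraph (G.W ⊕ G.B) where
  Adj v w := ∃ e, G.col e ∈ S ∧
    ((v = Sum.inl (G.src e) ∧ w = Sum.inr (G.tgt e)) ∨
     (w = Sum.inl (G.src e) ∧ v = Sum.inr (G.tgt e)))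
  symm := by
    refine ⟨?_⟩
    rintro v w ⟨e, hc, h⟩
    exact ⟨e, hc, h.symm⟩
  loopless := by
    refine ⟨?_⟩
    rintro v ⟨e, hc, (⟨h1, h2⟩ | ⟨h1, h2⟩)⟩ <;> rw [h1] at h2 <;> exact Sum.inl_ne_inr h2

def Connected (G : PreGraph D) : Prop := (G.adjOn Set.univ).Connected

/-- The number of faces (connected components of the `{i,j}`-bicolored subgraph). -/
noncomputable def facesCount (G : PreGraph D) (i j : Fin D) : ℕ :=
  Nat.card ((G.adjOn {i, j}).ConnectedComponent)

/-- The total number of faces of `G` (over all unordered pairs of colors). -/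
noncomputable def totalFaces (G : PreGraph D) : ℕ :=
  ∑ p ∈ Finset.univ.filter (fun p : Fin D × Fin D => p.1 < p.2), G.facesCount p.1 p.2

/-- Number of faces of the jacket associated to a cyclic permutation `σ` of the colors:
the faces of colors `σ^q(0), σ^{q+1}(0)`. -/
noncomputable def jacketFaces (G : PreGraph (D+1)) (σ : Equiv.Perm (Fin (D+1))) : ℕ :=
  ∑ q ∈ Finset.range (D+1), G.facesCount ((σ ^ q) 0) ((σ ^ (q+1)) 0)

/-- The genus of the jacket ribbon graph associated to `σ`, via Euler's formula
`2 - 2g = V - E + F`. -/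
noncomputable def jacketGenus (G : PreGraph (D+1)) (σ : Equiv.Perm (Fin (D+1))) : ℚ :=
  (2 - ((Nat.card G.W : ℚ) + (Nat.card G.B : ℚ)) + (Nat.card G.E : ℚ)
      - (G.jacketFaces σ : ℚ)) / 2

/-- Gurău's degree: the sum of the genera of the `D!/2` jackets of `G`; each jacket
corresponds to a pair `σ, σ⁻¹` of cyclic permutations of the `D+1` colors, whence the
factor `1/2`. -/
noncomputable def gurauDegree (G : PreGraph (D+1)) : ℚ :=
  (1/2) * ∑ σ ∈ Finset.univ.filter
      (fun σ : Equiv.Perm (Fin (D+1)) => σ.IsCycle ∧ σ.support = Finset.univ),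
    G.jacketGenus σ

end PreGraph

/-- The connected sum `G #_{e,f} K`: delete `e` and `f` and add two new edges
`E = (s(e), t(f))` (coded `true`) and `F = (s(f), t(e))` (coded `false`), both of the
color of `e`. -/
noncomputable def connSum {D : ℕ} (G K : PreGraph D) (e : G.E) (f : K.E) :
    PreGraph D where
  W := G.W ⊕ K.W
  B := G.B ⊕ K.B
  E := {e' : G.E // e' ≠ e} ⊕ ({f' : K.E // f' ≠ f} ⊕ Bool)
  src := fun x => match x with
    | .inl e' => .inl (G.src e'.1)
    | .inr (.inl f') => .inr (K.src f'.1)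
    | .inr (.inr true) => .inl (G.src e)
    | .inr (.inr false) => .inr (K.src f)
  tgt := fun x => match x with
    | .inl e' => .inl (G.tgt e'.1)
    | .inr (.inl f') => .inr (K.tgt f'.1)
    | .inr (.inr true) => .inr (K.tgt f)
    | .inr (.inr false) => .inl (G.tgt e)
  col := fun x => match x with
    | .inl e' => G.col e'.1
    | .inr (.inl f') => K.col f'.1
    | .inr (.inr _) => G.col e

/-!
By Euler's formula the genus of the jacket of a cyclic ordering `σ` of the colors is determined
by its number of faces `∑ₓ F(x, σ x)`, where `F(i, j)` counts the `{i, j}`-faces. Hence `ω(G)`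
is an affine function of `∑_σ ∑ₓ F(x, σ x)`, the outer sum running over the `D!` full cycles
`σ` on the `D + 1` colors. For distinct colors `x ≠ y` exactly `(D - 1)!` of these cycles send
`x` to `y` (conjugating by a transposition that fixes `x` permutes the fibres), so every face is
counted `2 (D - 1)!` times. Together with `|E| = (D + 1)|W| = (D + 1)|B|` from regularity, the
formula is a rearrangement.
-/

open Finset Equiv Equiv.Perm

lemma Finset.sum_offDiag_eq_two_nsmul_sum_lt {ι M : Type*} [LinearOrder ι] [Fintype ι]
    [AddCommMonoid M] (F : ι → ι → M) (hF : ∀ i j, F i j = F j i) :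
    ∑ p ∈ univ.offDiag, F p.1 p.2 =
      2 • ∑ p ∈ univ.filter (fun p : ι × ι => p.1 < p.2), F p.1 p.2 := by
  rw [← sum_filter_add_sum_filter_not univ.offDiag (fun p => p.1 < p.2), two_nsmul]
  congr 1
  · congr 1
    ext p
    simpa using ne_of_lt
  · refine sum_equiv (Equiv.prodComm ι ι) (fun p => ?_) fun p _ => hF _ _
    simp only [mem_filter, mem_offDiag, mem_univ, true_and, Equiv.prodComm_apply,
      Prod.fst_swap, Prod.snd_swap]
    constructor
    · rintro ⟨hne, hlt⟩; exact lt_of_le_of_ne (not_lt.mp hlt) hne.symm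
    · intro h; exact ⟨h.ne', not_lt.mpr h.le⟩

lemma Nat.card_eq_mul_of_existsUnique {E W C : Type*} (f : E → W) (g : E → C)
    (h : ∀ w c, ∃! e, f e = w ∧ g e = c) : Nat.card E = Nat.card W * Nat.card C := by
  rw [← Nat.card_prod]
  refine Nat.card_congr (Equiv.ofBijective (fun e => (f e, g e)) ?_)
  rw [Function.bijective_iff_existsUnique]
  rintro ⟨w, c⟩
  simpa only [Prod.mk.injEq] using h w c

namespace Equiv.Perm

variable {α : Type*} [Fintype α] [DecidableEq α]

variable (α) in
noncomputable def fullCycles : Finset (Perm α) :=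
  univ.filter fun σ => σ.IsCycle ∧ σ.support = univ

lemma mem_fullCycles_iff_cycleType {σ : Perm α} :
    σ ∈ fullCycles α ↔ σ.cycleType = {Fintype.card α} := by
  simp only [fullCycles, mem_filter, mem_univ, true_and]
  constructor
  · rintro ⟨hσ, hs⟩
    rw [hσ.cycleType, hs, card_univ]
  · intro h
    refine ⟨card_cycleType_eq_one.mp (by simp [h]), eq_univ_of_card _ ?_⟩
    rw [← sum_cycleType, h, Multiset.sum_singleton]

lemma card_fullCycles (h : 2 ≤ Fintype.card α) :
    #(fullCycles α) = (Fintype.card α - 1).factorial := by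
  calc #(fullCycles α) = #{σ : Perm α | σ.cycleType = {Fintype.card α}} := by
        congr 1
        ext σ
        simp [mem_fullCycles_iff_cycleType]
    _ = (Fintype.card α - 1).factorial := by
        rw [card_of_cycleType_singleton h le_rfl, Nat.choose_self, mul_one]

lemma apply_ne_self_of_mem_fullCycles {σ : Perm α} (hσ : σ ∈ fullCycles α) (x : α) :
    σ x ≠ x :=
  mem_support.mp <| by simp_all [fullCycles]

lemma conj_mem_fullCycles {σ : Perm α} (hσ : σ ∈ fullCycles α) (τ : Perm α) :
    τ * σ * τ⁻¹ ∈ fullCycles α := by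
  simp only [fullCycles, mem_filter, mem_univ, true_and] at hσ ⊢
  exact ⟨hσ.1.conj, by rw [support_conj, hσ.2, map_univ_equiv]⟩

lemma card_fullCycles_apply_eq_congr {x y z : α} (hy : x ≠ y) (hz : x ≠ z) :
    #{σ ∈ fullCycles α | σ x = y} = #{σ ∈ fullCycles α | σ x = z} := by
  have hconj : ∀ {a b}, x ≠ a → x ≠ b → ∀ σ ∈ {σ ∈ fullCycles α | σ x = a},
      swap a b * σ * swap a b ∈ {σ ∈ fullCycles α | σ x = b} := by
    intro a b ha hb σ hσ
    rw [mem_filter] at hσ ⊢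
    refine ⟨by simpa using conj_mem_fullCycles hσ.1 (swap a b), ?_⟩
    simp [swap_apply_of_ne_of_ne ha hb, hσ.2]
  exact card_nbij' (fun σ => swap y z * σ * swap y z) (fun σ => swap z y * σ * swap z y)
    (hconj hy hz) (hconj hz hy) (fun σ _ => by simp [swap_comm, mul_assoc])
    (fun σ _ => by simp [swap_comm, mul_assoc])

lemma card_fullCycles_apply_eq {x y : α} (hxy : x ≠ y) :
    #{σ ∈ fullCycles α | σ x = y} = (Fintype.card α - 2).factorial := by
  have hcard : 2 ≤ Fintype.card α := Fintype.one_lt_card_iff.mpr ⟨x, y, hxy⟩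
  have hfiber_self : #{σ ∈ fullCycles α | σ x = x} = 0 := by
    simpa using fun σ hσ => apply_ne_self_of_mem_fullCycles hσ x
  have hsum : ∑ z, #{σ ∈ fullCycles α | σ x = z} =
      (Fintype.card α - 1) * #{σ ∈ fullCycles α | σ x = y} := by
    rw [← add_sum_erase _ _ (mem_univ x), hfiber_self, zero_add,
      sum_congr rfl fun z hz => card_fullCycles_apply_eq_congr (ne_of_mem_erase hz).symm hxy,
      sum_const, card_erase_of_mem (mem_univ x), card_univ, smul_eq_mul]
  rw [← card_eq_sum_card_fiberwise fun σ _ => mem_univ (σ x), card_fullCycles hcard,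
    ← Nat.mul_factorial_pred (by omega)] at hsum
  exact (Nat.eq_of_mul_eq_mul_left (by omega) hsum).symm

lemma sum_fullCycles_sum_apply {M : Type*} [AddCommMonoid M] (f : α → α → M) :
    ∑ σ ∈ fullCycles α, ∑ x, f x (σ x) =
      (Fintype.card α - 2).factorial • ∑ p ∈ univ.offDiag, f p.1 p.2 := by
  have hfiber : ∀ x y, ∑ σ ∈ fullCycles α with σ x = y, f x (σ x) =
      if x ≠ y then (Fintype.card α - 2).factorial • f x y else 0 := by
    intro x y
    split_ifs with hxy
    · rw [sum_congr rfl fun σ hσ => by rw [(mem_filter.mp hσ).2], sum_const,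
        card_fullCycles_apply_eq hxy]
    · refine sum_eq_zero fun σ hσ => absurd (mem_filter.mp hσ).2 ?_
      simpa [not_not.mp hxy] using apply_ne_self_of_mem_fullCycles (mem_filter.mp hσ).1 y
  rw [sum_comm, smul_sum, show univ.offDiag = univ.filter fun p : α × α => p.1 ≠ p.2 by
    ext; simp, sum_filter, Fintype.sum_prod_type]
  refine sum_congr rfl fun x _ => ?_
  rw [← sum_fiberwise_of_maps_to fun σ _ => mem_univ (σ x)]
  exact sum_congr rfl fun y _ => hfiber x y

lemma sum_range_pow_apply {M : Type*} [AddCommMonoid M] {σ : Perm α} (hσ : σ ∈ fullCycles α)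
    (a : α) (g : α → M) :
    ∑ q ∈ range (Fintype.card α), g ((σ ^ q) a) = ∑ x, g x := by
  simp only [fullCycles, mem_filter, mem_univ, true_and] at hσ
  have horder : orderOf σ = Fintype.card α := by rw [hσ.1.orderOf, hσ.2, card_univ]
  have hinj : Set.InjOn (fun q => (σ ^ q) a) (range (Fintype.card α)) := by
    intro i hi j hj hij
    rw [← horder] at hi hj
    refine pow_injOn_Iio_orderOf (by simpa using hi) (by simpa using hj) ?_
    exact hσ.1.pow_eq_pow_iff.mpr ⟨a, by simp [← mem_support, hσ.2], hij⟩
  rw [← sum_image hinj, eq_univ_of_card _ ((card_image_of_injOn hinj).trans (card_range _))]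

end Equiv.Perm

namespace PreGraph

variable {D : ℕ}

lemma Regular.card_E_eq_card_W_mul {G : PreGraph D} (h : G.Regular) :
    Nat.card G.E = Nat.card G.W * D := by
  simpa using Nat.card_eq_mul_of_existsUnique G.src G.col h.1

lemma Regular.card_E_eq_card_B_mul {G : PreGraph D} (h : G.Regular) :
    Nat.card G.E = Nat.card G.B * D := by
  simpa using Nat.card_eq_mul_of_existsUnique G.tgt G.col h.2

lemma facesCount_comm (G : PreGraph D) (i j : Fin D) : G.facesCount i j = G.facesCount j i := by
  rw [facesCount, facesCount, Set.pair_comm]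

lemma jacketFaces_eq_sum (G : PreGraph (D + 1)) {σ : Perm (Fin (D + 1))}
    (hσ : σ ∈ fullCycles (Fin (D + 1))) : G.jacketFaces σ = ∑ x, G.facesCount x (σ x) := by
  have h := sum_range_pow_apply hσ 0 fun x => G.facesCount x (σ x)
  rw [Fintype.card_fin] at h
  rw [jacketFaces, ← h]
  simp only [pow_succ', Perm.mul_apply]

lemma sum_jacketFaces (G : PreGraph (D + 1)) :
    ∑ σ ∈ fullCycles (Fin (D + 1)), G.jacketFaces σ =
      (D - 1).factorial * (2 * G.totalFaces) := by
  rw [sum_congr rfl fun σ hσ => G.jacketFaces_eq_sum hσ, sum_fullCycles_sum_apply,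
    sum_offDiag_eq_two_nsmul_sum_lt _ G.facesCount_comm, Fintype.card_fin]
  rfl

lemma gurauDegree_eq (G : PreGraph (D + 1)) (hD : D ≠ 0) :
    G.gurauDegree = (D.factorial * (2 - (Nat.card G.W + Nat.card G.B) + Nat.card G.E)
      - (D - 1).factorial * (2 * G.totalFaces) : ℚ) / 4 := by
  have hcard : #(fullCycles (Fin (D + 1))) = D.factorial := by
    rw [card_fullCycles (by simp; omega), Fintype.card_fin, Nat.add_sub_cancel]
  have hsum := congrArg (Nat.cast (R := ℚ)) G.sum_jacketFaces
  push_cast at hsum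
  change (1 / 2) * ∑ σ ∈ fullCycles _, G.jacketGenus σ = _
  simp only [jacketGenus, ← sum_div, sum_sub_distrib, sum_const, hcard, nsmul_eq_mul, hsum]
  ring

end PreGraph

theorem face_counting_formula_general (D : ℕ) (G : PreGraph (D+1))
    (hreg : G.Regular) :
    (G.totalFaces : ℚ) =
      (1/2) * (D.choose 2 : ℚ) * ((Nat.card G.W : ℚ) + (Nat.card G.B : ℚ))
        + (D : ℚ) - 2 * G.gurauDegree / ((D-1).factorial : ℚ) := by
  rcases D with _ | d
  · have hT : G.totalFaces = 0 := by simp [PreGraph.totalFaces, Fin.lt_def]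
    have hω : G.gurauDegree = 0 := by
      simp [PreGraph.gurauDegree, Subsingleton.elim _ (1 : Equiv.Perm (Fin 1))]
    simp [hT, hω]
  have hW := hreg.card_E_eq_card_W_mul
  have hB := hreg.card_E_eq_card_B_mul
  have hWB : Nat.card G.B = Nat.card G.W :=
    Nat.eq_of_mul_eq_mul_right (Nat.succ_pos _) (hB.symm.trans hW)
  rw [G.gurauDegree_eq d.succ_ne_zero, hWB, hW, Nat.cast_choose_two, Nat.factorial_succ]
  simp only [Nat.add_sub_cancel]
  push_cast
  field_simp
  ring

/-- Face–counting formula for a closed connected `(D+1)`-colored graph: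
`|G⁽²⁾| = (1/2)·C(D,2)·|G⁽⁰⁾| + D - 2ω(G)/(D-1)!`. -/
theorem face_counting_formula (D : ℕ) (G : PreGraph (D+1))
    (hreg : G.Regular) (hconn : G.Connected) :
    (G.totalFaces : ℚ) =
      (1/2) * (D.choose 2 : ℚ) * ((Nat.card G.W : ℚ) + (Nat.card G.B : ℚ))
        + (D : ℚ) - 2 * G.gurauDegree / ((D-1).factorial : ℚ) :=
  face_counting_formula_general D G hreg
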